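/- (Theorem 2.1, part 2) Let the sequences {x_k^t}, {x_0^t}, {y_k^t} be generated by the flexible ADMM (Algorithm 2) for the consensus problem under the period-T essentially cyclic rule, and suppose Assumptions A1, A2, A3 hold. Let ({x_k*}, x_0*, y*) be any limit point of the sequence ({x_k^{t+1}}, x_0^{t+1}, y^{t+1}) (i.e., the limit along some subsequence). Then ({x_k*}, x_0*, y*) is a stationary solution of the reformulated consensus problem, i.e.: (i) ∇g_k(x_k*) + y_k* = 0 for all k = 1,…,K; (ii) x_0* minimizes over X the function x ↦ h(x) + Σ_{k=1}^K ⟨y_k*, x_k* − x⟩; (iii) x_k* = x_0* for all k = 1,…,K. -/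

import Mathlib

/-!
The augmented Lagrangian evaluated at the iterates is a Lyapunov function. From the first
iteration on, each dual variable satisfies `y_k = -∇g_k(x_k)` (first-order condition of the
`x_k`-step), so a dual step raises the Lagrangian by `ρ_k ‖x_k - x_0‖² = ‖Δy_k‖² / ρ_k`, which is
at most `L_k² / ρ_k ‖Δx_k‖²`, while the strongly convex primal steps lower it by
`(∑ ρ_k) / 2 ‖Δx_0‖²` and `γ_k / 2 ‖Δx_k‖²`. By A2 the net decrease dominates the squared
successive differences, and by the descent lemma and `ρ_k ≥ L_k` the Lagrangian stays above
`f(x_0) ≥ f̄`; hence all successive differences tend to `0`. Every block is updated in every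
window of `T` iterations, so the limits along the subsequence persist at nearby update times.
There the dual update gives `x*_k = x*_0`, and the `x_0`-step passes to the limit as a proximal
inequality, from which convexity of `h` removes the quadratic term.
-/

open Filter
open scoped RealInnerProductSpace BigOperators

/-- Augmented Lagrangian for the reformulated consensus problem. -/
noncomputable def augL {N K : ℕ} (g : Fin K → EuclideanSpace ℝ (Fin N) → ℝ)
    (h : EuclideanSpace ℝ (Fin N) → ℝ) (ρ : Fin K → ℝ)
    (xk : Fin K → EuclideanSpace ℝ (Fin N)) (x0 : EuclideanSpace ℝ (Fin N))
    (y : Fin K → EuclideanSpace ℝ (Fin N)) : ℝ :=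
  (∑ k, g k (xk k)) + h x0 + (∑ k, ⟪y k, xk k - x0⟫)
    + ∑ k, ρ k / 2 * ‖xk k - x0‖ ^ 2

open Finset Topology

theorem nonpos_of_forall_mem_Ioc_le_mul {a c : ℝ} (h : ∀ l ∈ Set.Ioc (0 : ℝ) 1, a ≤ l * c) :
    a ≤ 0 := by
  have hlim : Tendsto (fun l : ℝ => l * c) (𝓝[>] 0) (𝓝 0) := by
    simpa using ((continuous_mul_const c).tendsto 0).mono_left nhdsWithin_le_nhds
  refine ge_of_tendsto hlim ?_
  filter_upwards [Ioc_mem_nhdsGT (zero_lt_one' ℝ)] with l hl using h l hl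

section InnerProductSpace

variable {E : Type*} [NormedAddCommGroup E] [InnerProductSpace ℝ E]

theorem ConvexOn.add_inner_add_const {s : Set E} {f : E → ℝ} (hf : ConvexOn ℝ s f) (w : E)
    (c : ℝ) : ConvexOn ℝ s fun z => f z + (⟪w, z⟫ + c) :=
  hf.add (((innerₛₗ ℝ w).convexOn hf.1).add_const c)

theorem StrongConvexOn.add_sq_norm_sub_le_of_isMinOn {s : Set E} {σ : ℝ} {F : E → ℝ} {m z : E}
    (hF : StrongConvexOn s σ F) (hmin : IsMinOn F s m) (hm : m ∈ s) (hz : z ∈ s) :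
    F m + σ / 2 * ‖z - m‖ ^ 2 ≤ F z := by
  suffices F m + σ / 2 * ‖z - m‖ ^ 2 - F z ≤ 0 by linarith
  refine nonpos_of_forall_mem_Ioc_le_mul (c := σ / 2 * ‖z - m‖ ^ 2) fun l ⟨hl0, hl1⟩ => ?_
  have hconv := hF.2 hz hm hl0.le (sub_nonneg.2 hl1) (add_sub_cancel l 1)
  have hmin' := isMinOn_iff.1 hmin _ (hF.1 hz hm hl0.le (sub_nonneg.2 hl1) (add_sub_cancel l 1))
  simp only [smul_eq_mul] at hconv
  nlinarith

theorem ConvexOn.isMinOn_of_le_add_sq_norm_sub {s : Set E} {ψ : E → ℝ} {c : ℝ} {m : E}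
    (hψ : ConvexOn ℝ s ψ) (hm : m ∈ s) (h : ∀ z ∈ s, ψ m ≤ ψ z + c * ‖z - m‖ ^ 2) :
    IsMinOn ψ s m := by
  intro z hz
  suffices ψ m - ψ z ≤ 0 by simpa [sub_nonpos] using this
  refine nonpos_of_forall_mem_Ioc_le_mul (c := c * ‖z - m‖ ^ 2) fun l ⟨hl0, hl1⟩ => ?_
  have hzl := hψ.2 hz hm hl0.le (sub_nonneg.2 hl1) (add_sub_cancel l 1)
  have hmin := h _ (hψ.1 hz hm hl0.le (sub_nonneg.2 hl1) (add_sub_cancel l 1))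
  have hsub : l • z + (1 - l) • m - m = l • (z - m) := by
    rw [smul_sub, sub_smul, one_smul]
    abel
  rw [hsub, norm_smul, Real.norm_of_nonneg hl0.le, mul_pow] at hmin
  simp only [smul_eq_mul] at hzl
  have : l * (ψ m - ψ z) ≤ l * (l * (c * ‖z - m‖ ^ 2)) := by nlinarith
  exact le_of_mul_le_mul_left this hl0

theorem IsLocalMin.hasGradientAt_eq_zero [CompleteSpace E] {f : E → ℝ} {f' m : E}
    (hmin : IsLocalMin f m) (hf : HasGradientAt f f' m) : f' = 0 := by
  simpa using hmin.hasFDerivAt_eq_zero (hasGradientAt_iff_hasFDerivAt.1 hf)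

theorem le_add_inner_add_sq_norm_of_lipschitz_gradient [CompleteSpace E] {f : E → ℝ}
    {f' : E → E} {L : ℝ} (hf : ∀ z, HasGradientAt f (f' z) z)
    (hL : ∀ u v, ‖f' u - f' v‖ ≤ L * ‖u - v‖) (u v : E) :
    f v ≤ f u + ⟪f' u, v - u⟫ + L / 2 * ‖v - u‖ ^ 2 := by
  set w := v - u
  let φ : ℝ → ℝ := fun s => f (u + s • w) - s * ⟪f' u, w⟫ - L / 2 * s ^ 2 * ‖w‖ ^ 2
  have hφ : ∀ s : ℝ, HasDerivAt φ (⟪f' (u + s • w), w⟫ - ⟪f' u, w⟫ - L * s * ‖w‖ ^ 2) s := by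
    intro s
    have hline : HasDerivAt (fun s : ℝ => u + s • w) w s := by
      simpa using ((hasDerivAt_id s).smul_const w).const_add u
    have hfline := (hf (u + s • w)).hasFDerivAt.comp_hasDerivAt s hline
    refine ((hfline.sub ((hasDerivAt_id s).mul_const ⟪f' u, w⟫)).sub
      (((hasDerivAt_pow 2 s).const_mul (L / 2)).mul_const (‖w‖ ^ 2))).congr_deriv ?_
    rw [InnerProductSpace.toDual_apply_apply]
    ring
  have hanti : AntitoneOn φ (Set.Icc 0 1) := by
    refine antitoneOn_of_hasDerivWithinAt_nonpos (convex_Icc 0 1)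
      (fun s _ => (hφ s).continuousAt.continuousWithinAt)
      (fun s _ => (hφ s).hasDerivWithinAt) fun s hs => ?_
    rw [interior_Icc] at hs
    have hgrowth : ⟪f' (u + s • w) - f' u, w⟫ ≤ L * s * ‖w‖ ^ 2 :=
      calc ⟪f' (u + s • w) - f' u, w⟫ ≤ ‖f' (u + s • w) - f' u‖ * ‖w‖ := real_inner_le_norm _ _
        _ ≤ L * ‖u + s • w - u‖ * ‖w‖ := by gcongr; exact hL _ _
        _ = L * s * ‖w‖ ^ 2 := by
          rw [add_sub_cancel_left, norm_smul, Real.norm_of_nonneg hs.1.le]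
          ring
    rw [inner_sub_left] at hgrowth
    linarith
  have h01 := hanti (by simp) (by simp) zero_le_one
  simp only [φ, zero_smul, add_zero, one_smul, zero_mul, sub_zero, one_mul, one_pow,
    add_sub_cancel, w] at h01
  linarith

noncomputable def blockLagrangian (g : E → ℝ) (ρ : ℝ) (x x0 y : E) : ℝ :=
  g x + ⟪y, x - x0⟫ + ρ / 2 * ‖x - x0‖ ^ 2

section BlockLagrangian

variable {g : E → ℝ} {g' : E → E} {ρ γ L : ℝ}

theorem hasGradientAt_blockLagrangian [CompleteSpace E] {d x : E} (hg : HasGradientAt g d x)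
    (x0 y : E) : HasGradientAt (blockLagrangian g ρ · x0 y) (d + y + ρ • (x - x0)) x := by
  rw [hasGradientAt_iff_hasFDerivAt]
  have hsub := (hasFDerivAt_id (𝕜 := ℝ) x).sub_const x0
  refine ((hg.hasFDerivAt.add ((hasFDerivAt_const y x).inner (𝕜 := ℝ) hsub)).add
    (hsub.norm_sq.const_mul (ρ / 2))).congr_fderiv ?_
  ext v
  simp [← mul_assoc]

theorem blockLagrangian_strongConvexOn {s : Set E}
    (hg : StrongConvexOn s γ fun z => g z + ρ / 2 * ‖z‖ ^ 2) (x0 y : E) :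
    StrongConvexOn s γ (blockLagrangian g ρ · x0 y) := by
  rw [strongConvexOn_iff_convex] at hg ⊢
  refine (hg.add_inner_add_const (y - ρ • x0) (ρ / 2 * ‖x0‖ ^ 2 - ⟪y, x0⟫)).congr fun z _ => ?_
  simp only [blockLagrangian, norm_sub_sq_real, inner_sub_right, inner_sub_left,
    real_inner_smul_left, real_inner_comm x0 z]
  ring

theorem add_smul_sub_eq_neg_of_isMinOn_blockLagrangian [CompleteSpace E]
    (hg : ∀ z, HasGradientAt g (g' z) z) {x x0 y : E}
    (hmin : IsMinOn (blockLagrangian g ρ · x0 y) Set.univ x) : y + ρ • (x - x0) = -g' x := by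
  have := (hmin.isLocalMin Filter.univ_mem).hasGradientAt_eq_zero
    (hasGradientAt_blockLagrangian (hg x) x0 y)
  rw [eq_neg_iff_add_eq_zero, ← this]
  abel

theorem blockLagrangian_add_smul_sub (x x0 y : E) :
    blockLagrangian g ρ x x0 (y + ρ • (x - x0))
      = blockLagrangian g ρ x x0 y + ρ * ‖x - x0‖ ^ 2 := by
  rw [blockLagrangian, blockLagrangian, inner_add_left, real_inner_smul_left,
    real_inner_self_eq_norm_sq]
  ring

theorem blockLagrangian_update_add_le [CompleteSpace E] (hg : ∀ z, HasGradientAt g (g' z) z)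
    (hL : ∀ u v, ‖g' u - g' v‖ ≤ L * ‖u - v‖)
    (hconv : StrongConvexOn Set.univ γ fun z => g z + ρ / 2 * ‖z‖ ^ 2) (hρ : 0 < ρ)
    {x x0 y x' : E} (hy : y = -g' x) (hmin : IsMinOn (blockLagrangian g ρ · x0 y) Set.univ x') :
    (γ / 2 - L ^ 2 / ρ) * ‖x' - x‖ ^ 2 + blockLagrangian g ρ x' x0 (y + ρ • (x' - x0))
      ≤ blockLagrangian g ρ x x0 y := by
  have hprimal := (blockLagrangian_strongConvexOn hconv x0 y).add_sq_norm_sub_le_of_isMinOn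
    hmin (Set.mem_univ x') (Set.mem_univ x)
  -- the dual step is controlled by the primal one because `y = -∇g(x)` before and after it
  have hdual : ρ * ‖x' - x0‖ ≤ L * ‖x' - x‖ :=
    calc ρ * ‖x' - x0‖ = ‖(y + ρ • (x' - x0)) - y‖ := by
          rw [add_sub_cancel_left, norm_smul, Real.norm_of_nonneg hρ.le]
      _ = ‖g' x - g' x'‖ := by
          rw [add_smul_sub_eq_neg_of_isMinOn_blockLagrangian hg hmin, hy, neg_sub_neg]
      _ ≤ L * ‖x' - x‖ := by
          rw [norm_sub_rev x']
          exact hL _ _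
  have hdual_sq : ρ * ‖x' - x0‖ ^ 2 ≤ L ^ 2 / ρ * ‖x' - x‖ ^ 2 := by
    rw [div_mul_eq_mul_div, le_div_iff₀ hρ]
    nlinarith [pow_le_pow_left₀ (by positivity) hdual 2]
  rw [norm_sub_rev x] at hprimal
  rw [blockLagrangian_add_smul_sub]
  linarith

theorem le_blockLagrangian_neg_gradient [CompleteSpace E] (hg : ∀ z, HasGradientAt g (g' z) z)
    (hL : ∀ u v, ‖g' u - g' v‖ ≤ L * ‖u - v‖) (hLρ : L ≤ ρ) (x x0 : E) :
    g x0 ≤ blockLagrangian g ρ x x0 (-g' x) := by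
  have hdescent := le_add_inner_add_sq_norm_of_lipschitz_gradient hg hL x x0
  have hquad : L / 2 * ‖x0 - x‖ ^ 2 ≤ ρ / 2 * ‖x0 - x‖ ^ 2 := by gcongr
  rw [blockLagrangian, inner_neg_left, ← inner_neg_right, neg_sub, norm_sub_rev x]
  linarith

end BlockLagrangian

end InnerProductSpace

section Sequences

variable {E : Type*} [NormedAddCommGroup E]

theorem norm_add_sub_le_sum_range_norm_succ_sub (u : ℕ → E) (a : ℕ) {n T : ℕ} (hn : n ≤ T) :
    ‖u (a + n) - u a‖ ≤ ∑ i ∈ range T, ‖u (a + i + 1) - u (a + i)‖ :=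
  calc ‖u (a + n) - u a‖ ≤ ∑ i ∈ range n, ‖u (a + i + 1) - u (a + i)‖ := by
        simpa [dist_eq_norm', add_assoc] using dist_le_range_sum_dist (fun i => u (a + i)) n
    _ ≤ ∑ i ∈ range T, ‖u (a + i + 1) - u (a + i)‖ :=
        sum_le_sum_of_subset_of_nonneg (range_subset_range.2 hn) fun _ _ _ => norm_nonneg _

theorem Filter.Tendsto.comp_of_tendsto_succ_sub {u : ℕ → E} {φ s : ℕ → ℕ} {a : E}
    (ha : Tendsto (fun t => u (φ t)) atTop (𝓝 a))
    (hu : Tendsto (fun n => u (n + 1) - u n) atTop (𝓝 0)) (hφ : Tendsto φ atTop atTop) {T : ℕ}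
    (hs : ∀ t, φ t ≤ s t ∧ s t ≤ φ t + T) :
    Tendsto (fun t => u (s t)) atTop (𝓝 a) := by
  have hsteps : Tendsto (fun t => ∑ i ∈ range T, ‖u (φ t + i + 1) - u (φ t + i)‖) atTop (𝓝 0) := by
    simpa using tendsto_finsetSum (range T) fun i _ =>
      ((tendsto_add_atTop_iff_nat i).2 hu.norm).comp hφ
  have hgap : Tendsto (fun t => u (s t) - u (φ t)) atTop (𝓝 0) := by
    refine squeeze_zero_norm (fun t => ?_) hsteps
    obtain ⟨d, hd⟩ := Nat.exists_eq_add_of_le (hs t).1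
    rw [hd]
    exact norm_add_sub_le_sum_range_norm_succ_sub u (φ t) (by have := (hs t).2; omega)
  simpa using hgap.add ha

theorem tendsto_zero_of_mul_sq_norm_le {c : ℝ} (hc : 0 < c) {v : ℕ → E} {D : ℕ → ℝ}
    (hD : Tendsto D atTop (𝓝 0)) (h : ∀ t, c * ‖v t‖ ^ 2 ≤ D t) : Tendsto v atTop (𝓝 0) := by
  have hsq : Tendsto (fun t => ‖v t‖ ^ 2) atTop (𝓝 0) := by
    refine squeeze_zero (fun t => by positivity) (fun t => ?_) (by simpa using hD.div_const c)
    rw [le_div_iff₀ hc, mul_comm]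
    exact h t
  rw [tendsto_zero_iff_norm_tendsto_zero]
  simpa [Function.comp_def, Real.sqrt_sq_eq_abs] using (Real.continuous_sqrt.tendsto 0).comp hsq

end Sequences

theorem tendsto_zero_of_add_le_of_bddBelow {P D : ℕ → ℝ} (hD : ∀ t, 0 ≤ D t)
    (hP : ∀ t, P (t + 1) + D t ≤ P t) (hb : BddBelow (Set.range P)) : Tendsto D atTop (𝓝 0) := by
  have hanti : Antitone P := antitone_nat_of_succ_le fun t => by linarith [hD t, hP t]
  have hlim := tendsto_atTop_ciInf hanti hb
  have hdiff : Tendsto (fun t => P t - P (t + 1)) atTop (𝓝 0) := by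
    simpa using hlim.sub (hlim.comp (tendsto_add_atTop_nat 1))
  exact squeeze_zero hD (fun t => by linarith [hP t]) hdiff

theorem exists_update_times {K : ℕ} {C : ℕ → Finset (Option (Fin K))} {T : ℕ}
    (hcyc : ∀ (t : ℕ) (j : Option (Fin K)), ∃ i, 1 ≤ i ∧ i ≤ T ∧ j ∈ C (t + i))
    (j : Option (Fin K)) (φ : ℕ → ℕ) :
    ∃ σ : ℕ → ℕ, ∀ t, φ t ≤ σ t ∧ σ t + 1 ≤ φ t + T ∧ j ∈ C (σ t + 1) := by
  choose i hi1 hiT hmem using fun t => hcyc (φ t) j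
  refine ⟨fun t => φ t + i t - 1, fun t => ?_⟩
  dsimp only
  have := hi1 t
  have := hiT t
  refine ⟨by omega, by omega, ?_⟩
  rw [show φ t + i t - 1 + 1 = φ t + i t by omega]
  exact hmem t

section Consensus

variable {N K : ℕ} {g : Fin K → EuclideanSpace ℝ (Fin N) → ℝ}
  {h : EuclideanSpace ℝ (Fin N) → ℝ} {X : Set (EuclideanSpace ℝ (Fin N))} {ρ : Fin K → ℝ}

theorem augL_eq_sum_blockLagrangian (xk : Fin K → EuclideanSpace ℝ (Fin N))
    (x0 : EuclideanSpace ℝ (Fin N)) (y : Fin K → EuclideanSpace ℝ (Fin N)) :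
    augL g h ρ xk x0 y = ∑ k, blockLagrangian (g k) (ρ k) (xk k) x0 (y k) + h x0 := by
  simp only [augL, blockLagrangian, sum_add_distrib]
  ring

theorem augL_const_left (a z : EuclideanSpace ℝ (Fin N)) (y : Fin K → EuclideanSpace ℝ (Fin N)) :
    augL g h ρ (fun _ => a) z y
      = ∑ k, g k a + (h z + ∑ k, ⟪y k, a - z⟫) + (∑ k, ρ k) / 2 * ‖z - a‖ ^ 2 := by
  rw [augL, sum_div, sum_mul, norm_sub_rev]
  ring

theorem augL_strongConvexOn (hh : ConvexOn ℝ X h) (xk : Fin K → EuclideanSpace ℝ (Fin N))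
    (y : Fin K → EuclideanSpace ℝ (Fin N)) :
    StrongConvexOn X (∑ k, ρ k) fun z => augL g h ρ xk z y := by
  rw [strongConvexOn_iff_convex]
  refine (hh.add_inner_add_const (-∑ k, (y k + ρ k • xk k))
    (∑ k, (g k (xk k) + ⟪y k, xk k⟫ + ρ k / 2 * ‖xk k‖ ^ 2))).congr fun z _ => ?_
  have hblock : ∀ k, ⟪y k, xk k - z⟫ + ρ k / 2 * ‖xk k - z‖ ^ 2 - ρ k / 2 * ‖z‖ ^ 2
      = ⟪y k, xk k⟫ + ρ k / 2 * ‖xk k‖ ^ 2 - ⟪y k + ρ k • xk k, z⟫ := fun k => by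
    rw [norm_sub_sq_real, inner_sub_right, inner_add_left, real_inner_smul_left]
    ring
  have hsum := sum_congr rfl fun k (_ : k ∈ univ) => hblock k
  simp only [sum_sub_distrib, sum_add_distrib, ← sum_inner, ← sum_mul, ← sum_div] at hsum
  simp only [augL, inner_neg_left, sum_add_distrib]
  linarith

theorem continuous_augL (hg : ∀ k, Continuous (g k)) (hh : Continuous h) :
    Continuous fun p : (Fin K → EuclideanSpace ℝ (Fin N)) × EuclideanSpace ℝ (Fin N)
        × (Fin K → EuclideanSpace ℝ (Fin N)) => augL g h ρ p.1 p.2.1 p.2.2 := by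
  unfold augL
  fun_prop

theorem isMinOn_add_sum_inner_of_isMinOn_augL {a : EuclideanSpace ℝ (Fin N)}
    {y : Fin K → EuclideanSpace ℝ (Fin N)} (hh : ConvexOn ℝ X h) (ha : a ∈ X)
    (hmin : IsMinOn (fun z => augL g h ρ (fun _ => a) z y) X a) :
    IsMinOn (fun z => h z + ∑ k, ⟪y k, a - z⟫) X a := by
  have hψ : ConvexOn ℝ X fun z => h z + ∑ k, ⟪y k, a - z⟫ := by
    refine (hh.add_inner_add_const (-∑ k, y k) (∑ k, ⟪y k, a⟫)).congr fun z _ => ?_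
    simp only [inner_sub_right, sum_sub_distrib, inner_neg_left, sum_inner]
    ring
  refine hψ.isMinOn_of_le_add_sq_norm_sub ha (c := (∑ k, ρ k) / 2) fun z hz => ?_
  have := isMinOn_iff.1 hmin z hz
  simp only [augL_const_left, sub_self, norm_zero, inner_zero_right, sum_const_zero] at this ⊢
  nlinarith [sq_nonneg ‖z - a‖]

end Consensus

/-- `none ∈ C t` means that `x_0` is updated at iteration `t`, and `some k ∈ C t` that `x_k` and
`y_k` are. -/
structure IsFlexibleADMM {N K : ℕ} (g : Fin K → EuclideanSpace ℝ (Fin N) → ℝ)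
    (h : EuclideanSpace ℝ (Fin N) → ℝ) (X : Set (EuclideanSpace ℝ (Fin N))) (ρ : Fin K → ℝ)
    (x : ℕ → Fin K → EuclideanSpace ℝ (Fin N)) (x0 : ℕ → EuclideanSpace ℝ (Fin N))
    (y : ℕ → Fin K → EuclideanSpace ℝ (Fin N)) (C : ℕ → Finset (Option (Fin K))) : Prop where
  C_one : C 1 = univ
  x0_mem_of_mem : ∀ t, none ∈ C (t + 1) → x0 (t + 1) ∈ X
  isMinOn_x0 : ∀ t, none ∈ C (t + 1) → IsMinOn (fun z => augL g h ρ (x t) z (y t)) X (x0 (t + 1))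
  x0_succ_of_notMem : ∀ t, none ∉ C (t + 1) → x0 (t + 1) = x0 t
  isMinOn_x : ∀ t k, some k ∈ C (t + 1) →
    IsMinOn (blockLagrangian (g k) (ρ k) · (x0 (t + 1)) (y t k)) Set.univ (x (t + 1) k)
  x_succ_of_notMem : ∀ t k, some k ∉ C (t + 1) → x (t + 1) k = x t k
  y_succ_of_mem : ∀ t k, some k ∈ C (t + 1) → y (t + 1) k = y t k + ρ k • (x (t + 1) k - x0 (t + 1))
  y_succ_of_notMem : ∀ t k, some k ∉ C (t + 1) → y (t + 1) k = y t k

namespace IsFlexibleADMM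

variable {N K : ℕ} {g : Fin K → EuclideanSpace ℝ (Fin N) → ℝ}
  {g' : Fin K → EuclideanSpace ℝ (Fin N) → EuclideanSpace ℝ (Fin N)}
  {h : EuclideanSpace ℝ (Fin N) → ℝ} {X : Set (EuclideanSpace ℝ (Fin N))} {Lg ρ γ : Fin K → ℝ}
  {x : ℕ → Fin K → EuclideanSpace ℝ (Fin N)} {x0 : ℕ → EuclideanSpace ℝ (Fin N)}
  {y : ℕ → Fin K → EuclideanSpace ℝ (Fin N)} {C : ℕ → Finset (Option (Fin K))}
  {xs ys : Fin K → EuclideanSpace ℝ (Fin N)} {x0s : EuclideanSpace ℝ (Fin N)} {φ : ℕ → ℕ}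

theorem x0_mem (hA : IsFlexibleADMM g h X ρ x x0 y C) {t : ℕ} (ht : 1 ≤ t) : x0 t ∈ X := by
  induction t, ht using Nat.le_induction with
  | base => exact hA.x0_mem_of_mem 0 (by simp [hA.C_one])
  | succ t _ ih =>
    by_cases hmem : none ∈ C (t + 1)
    · exact hA.x0_mem_of_mem t hmem
    · rwa [hA.x0_succ_of_notMem t hmem]

theorem y_succ_eq_neg_grad (hA : IsFlexibleADMM g h X ρ x x0 y C)
    (hgrad : ∀ k z, HasGradientAt (g k) (g' k z) z) {t : ℕ} {k : Fin K}
    (hk : some k ∈ C (t + 1)) : y (t + 1) k = -g' k (x (t + 1) k) := by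
  rw [hA.y_succ_of_mem t k hk]
  exact add_smul_sub_eq_neg_of_isMinOn_blockLagrangian (hgrad k) (hA.isMinOn_x t k hk)

theorem y_eq_neg_grad (hA : IsFlexibleADMM g h X ρ x x0 y C)
    (hgrad : ∀ k z, HasGradientAt (g k) (g' k z) z) {t : ℕ} (ht : 1 ≤ t) (k : Fin K) :
    y t k = -g' k (x t k) := by
  induction t, ht using Nat.le_induction with
  | base => exact hA.y_succ_eq_neg_grad hgrad (by simp [hA.C_one])
  | succ t _ ih =>
    by_cases hmem : some k ∈ C (t + 1)
    · exact hA.y_succ_eq_neg_grad hgrad hmem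
    · rwa [hA.y_succ_of_notMem t k hmem, hA.x_succ_of_notMem t k hmem]

theorem augL_x0_succ_add_le (hA : IsFlexibleADMM g h X ρ x x0 y C) (hh : ConvexOn ℝ X h)
    {t : ℕ} (ht : 1 ≤ t) :
    augL g h ρ (x t) (x0 (t + 1)) (y t) + (∑ k, ρ k) / 2 * ‖x0 (t + 1) - x0 t‖ ^ 2
      ≤ augL g h ρ (x t) (x0 t) (y t) := by
  by_cases hmem : none ∈ C (t + 1)
  · rw [norm_sub_rev]
    exact (augL_strongConvexOn hh (x t) (y t)).add_sq_norm_sub_le_of_isMinOn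
      (hA.isMinOn_x0 t hmem) (hA.x0_mem_of_mem t hmem) (hA.x0_mem ht)
  · simp [hA.x0_succ_of_notMem t hmem]

theorem blockLagrangian_succ_add_le (hA : IsFlexibleADMM g h X ρ x x0 y C)
    (hgrad : ∀ k z, HasGradientAt (g k) (g' k z) z)
    (hLip : ∀ k u v, ‖g' k u - g' k v‖ ≤ Lg k * ‖u - v‖) (hρ : ∀ k, 0 < ρ k)
    (hstrong : ∀ k, StrongConvexOn Set.univ (γ k) fun z => g k z + ρ k / 2 * ‖z‖ ^ 2)
    {t : ℕ} (ht : 1 ≤ t) (k : Fin K) :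
    (γ k / 2 - Lg k ^ 2 / ρ k) * ‖x (t + 1) k - x t k‖ ^ 2
        + blockLagrangian (g k) (ρ k) (x (t + 1) k) (x0 (t + 1)) (y (t + 1) k)
      ≤ blockLagrangian (g k) (ρ k) (x t k) (x0 (t + 1)) (y t k) := by
  by_cases hmem : some k ∈ C (t + 1)
  · rw [hA.y_succ_of_mem t k hmem]
    exact blockLagrangian_update_add_le (hgrad k) (hLip k) (hstrong k) (hρ k)
      (hA.y_eq_neg_grad hgrad ht k) (hA.isMinOn_x t k hmem)
  · simp [hA.x_succ_of_notMem t k hmem, hA.y_succ_of_notMem t k hmem]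

theorem augL_succ_add_le (hA : IsFlexibleADMM g h X ρ x x0 y C)
    (hgrad : ∀ k z, HasGradientAt (g k) (g' k z) z)
    (hLip : ∀ k u v, ‖g' k u - g' k v‖ ≤ Lg k * ‖u - v‖) (hh : ConvexOn ℝ X h)
    (hρ : ∀ k, 0 < ρ k)
    (hstrong : ∀ k, StrongConvexOn Set.univ (γ k) fun z => g k z + ρ k / 2 * ‖z‖ ^ 2)
    {t : ℕ} (ht : 1 ≤ t) :
    augL g h ρ (x (t + 1)) (x0 (t + 1)) (y (t + 1))
        + ((∑ k, ρ k) / 2 * ‖x0 (t + 1) - x0 t‖ ^ 2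
          + ∑ k, (γ k / 2 - Lg k ^ 2 / ρ k) * ‖x (t + 1) k - x t k‖ ^ 2)
      ≤ augL g h ρ (x t) (x0 t) (y t) := by
  have hx0 := hA.augL_x0_succ_add_le hh ht
  have hblocks := sum_le_sum fun k (_ : k ∈ univ) =>
    hA.blockLagrangian_succ_add_le hgrad hLip hρ hstrong ht k
  rw [sum_add_distrib] at hblocks
  simp only [augL_eq_sum_blockLagrangian] at hx0 ⊢
  linarith

theorem sum_add_le_augL (hA : IsFlexibleADMM g h X ρ x x0 y C)
    (hgrad : ∀ k z, HasGradientAt (g k) (g' k z) z)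
    (hLip : ∀ k u v, ‖g' k u - g' k v‖ ≤ Lg k * ‖u - v‖) (hLρ : ∀ k, Lg k ≤ ρ k)
    {t : ℕ} (ht : 1 ≤ t) :
    ∑ k, g k (x0 t) + h (x0 t) ≤ augL g h ρ (x t) (x0 t) (y t) := by
  rw [augL_eq_sum_blockLagrangian]
  gcongr with k
  rw [hA.y_eq_neg_grad hgrad ht k]
  exact le_blockLagrangian_neg_gradient (hgrad k) (hLip k) (hLρ k) _ _

theorem tendsto_succ_sub (hA : IsFlexibleADMM g h X ρ x x0 y C) (hK : 0 < K)
    (hgrad : ∀ k z, HasGradientAt (g k) (g' k z) z)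
    (hLip : ∀ k u v, ‖g' k u - g' k v‖ ≤ Lg k * ‖u - v‖) (hh : ConvexOn ℝ X h)
    (hρ : ∀ k, 0 < ρ k)
    (hstrong : ∀ k, StrongConvexOn Set.univ (γ k) fun z => g k z + ρ k / 2 * ‖z‖ ^ 2)
    (hργ : ∀ k, 2 * Lg k ^ 2 < ρ k * γ k) (hLρ : ∀ k, Lg k ≤ ρ k)
    (hbdd : BddBelow ((fun z => (∑ k, g k z) + h z) '' X)) :
    Tendsto (fun t => x0 (t + 1) - x0 t) atTop (𝓝 0) ∧
      ∀ k, Tendsto (fun t => x (t + 1) k - x t k) atTop (𝓝 0) := by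
  have hc : ∀ k, 0 < γ k / 2 - Lg k ^ 2 / ρ k := fun k => by
    rw [sub_pos, div_lt_div_iff₀ (hρ k) two_pos]
    linarith [hργ k]
  have hρsum : 0 < ∑ k, ρ k := sum_pos (fun k _ => hρ k) ⟨⟨0, hK⟩, mem_univ _⟩
  have hx_nonneg : ∀ t, 0 ≤ ∑ k, (γ k / 2 - Lg k ^ 2 / ρ k) * ‖x (t + 1) k - x t k‖ ^ 2 :=
    fun t => sum_nonneg fun k _ => by have := hc k; positivity
  have hbddL : BddBelow (Set.range fun t => augL g h ρ (x (t + 1)) (x0 (t + 1)) (y (t + 1))) := by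
    obtain ⟨b, hb⟩ := hbdd
    refine ⟨b, Set.forall_mem_range.2 fun t => ?_⟩
    exact (hb ⟨_, hA.x0_mem (Nat.le_add_left 1 t), rfl⟩).trans
      (hA.sum_add_le_augL hgrad hLip hLρ (Nat.le_add_left 1 t))
  have hD := tendsto_zero_of_add_le_of_bddBelow
    (fun t => add_nonneg (by positivity) (hx_nonneg (t + 1)))
    (fun t => hA.augL_succ_add_le hgrad hLip hh hρ hstrong (Nat.le_add_left 1 t)) hbddL
  refine ⟨(tendsto_add_atTop_iff_nat 1).1 <| tendsto_zero_of_mul_sq_norm_le (half_pos hρsum) hD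
    fun t => le_add_of_nonneg_right (hx_nonneg (t + 1)), fun k => ?_⟩
  refine (tendsto_add_atTop_iff_nat 1).1 <| tendsto_zero_of_mul_sq_norm_le (hc k) hD fun t => ?_
  refine le_add_of_nonneg_of_le (by positivity) ?_
  exact single_le_sum
    (f := fun j => (γ j / 2 - Lg j ^ 2 / ρ j) * ‖x (t + 1 + 1) j - x (t + 1) j‖ ^ 2)
    (fun j _ => by have := hc j; positivity) (mem_univ k)

theorem tendsto_y_of_tendsto_x (hA : IsFlexibleADMM g h X ρ x x0 y C)
    (hgrad : ∀ k z, HasGradientAt (g k) (g' k z) z) {k : Fin K} (hcont : Continuous (g' k))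
    {s : ℕ → ℕ} (hs : Tendsto s atTop atTop) {a : EuclideanSpace ℝ (Fin N)}
    (hx : Tendsto (fun t => x (s t) k) atTop (𝓝 a)) :
    Tendsto (fun t => y (s t) k) atTop (𝓝 (-g' k a)) :=
  ((hcont.tendsto a).comp hx).neg.congr' <| (hs.eventually_ge_atTop 1).mono fun _ ht =>
    (hA.y_eq_neg_grad hgrad ht k).symm

theorem grad_add_eq_zero_of_tendsto (hA : IsFlexibleADMM g h X ρ x x0 y C)
    (hgrad : ∀ k z, HasGradientAt (g k) (g' k z) z) {k : Fin K} (hcont : Continuous (g' k))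
    (hφ : Tendsto φ atTop atTop) (hx : Tendsto (fun t => x (φ t) k) atTop (𝓝 (xs k)))
    (hy : Tendsto (fun t => y (φ t) k) atTop (𝓝 (ys k))) :
    g' k (xs k) + ys k = 0 :=
  neg_eq_iff_add_eq_zero.1 <| tendsto_nhds_unique (hA.tendsto_y_of_tendsto_x hgrad hcont hφ hx) hy

theorem eq_of_tendsto (hA : IsFlexibleADMM g h X ρ x x0 y C)
    (hgrad : ∀ k z, HasGradientAt (g k) (g' k z) z) {k : Fin K} (hcont : Continuous (g' k))
    (hρ : 0 < ρ k) {T : ℕ}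
    (hcyc : ∀ (t : ℕ) (j : Option (Fin K)), ∃ i, 1 ≤ i ∧ i ≤ T ∧ j ∈ C (t + i))
    (hdx0 : Tendsto (fun t => x0 (t + 1) - x0 t) atTop (𝓝 0))
    (hdx : Tendsto (fun t => x (t + 1) k - x t k) atTop (𝓝 0)) (hφ : Tendsto φ atTop atTop)
    (hx : Tendsto (fun t => x (φ t) k) atTop (𝓝 (xs k)))
    (hx0 : Tendsto (fun t => x0 (φ t)) atTop (𝓝 x0s)) :
    xs k = x0s := by
  obtain ⟨σ, hσ⟩ := exists_update_times hcyc (some k) φ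
  have hσ_tendsto : Tendsto σ atTop atTop := tendsto_atTop_mono (fun t => (hσ t).1) hφ
  have hxσ : Tendsto (fun t => x (σ t) k) atTop (𝓝 (xs k)) :=
    hx.comp_of_tendsto_succ_sub (u := fun n => x n k) hdx hφ (T := T) fun t =>
      ⟨(hσ t).1, by have := hσ t; omega⟩
  have hxσ' : Tendsto (fun t => x (σ t + 1) k) atTop (𝓝 (xs k)) :=
    hx.comp_of_tendsto_succ_sub (u := fun n => x n k) hdx hφ fun t =>
      ⟨by have := hσ t; omega, (hσ t).2.1⟩
  have hx0σ' : Tendsto (fun t => x0 (σ t + 1)) atTop (𝓝 x0s) :=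
    hx0.comp_of_tendsto_succ_sub hdx0 hφ fun t => ⟨by have := hσ t; omega, (hσ t).2.1⟩
  -- at the update times the dual increment `ρ (x_k - x_0)` tends to `ρ (x*_k - x*_0)`, and
  -- also to `0` because `y_k = -∇g_k(x_k)`
  have hlim₁ := (hxσ'.sub hx0σ').const_smul (ρ k)
  have hlim₂ := (hA.tendsto_y_of_tendsto_x hgrad hcont (s := fun t => σ t + 1)
    (tendsto_add_atTop_nat 1 |>.comp hσ_tendsto) hxσ').sub
    (hA.tendsto_y_of_tendsto_x hgrad hcont hσ_tendsto hxσ)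
  rw [sub_self] at hlim₂
  have hzero := tendsto_nhds_unique (hlim₂.congr fun t => by
    rw [hA.y_succ_of_mem _ _ (hσ t).2.2, add_sub_cancel_left]) hlim₁
  rwa [eq_comm, smul_eq_zero_iff_right hρ.ne', sub_eq_zero] at hzero

theorem isMinOn_augL_of_tendsto (hA : IsFlexibleADMM g h X ρ x x0 y C)
    (hgrad : ∀ k z, HasGradientAt (g k) (g' k z) z) (hcont : ∀ k, Continuous (g' k))
    (hh : Continuous h) {T : ℕ}
    (hcyc : ∀ (t : ℕ) (j : Option (Fin K)), ∃ i, 1 ≤ i ∧ i ≤ T ∧ j ∈ C (t + i))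
    (hdx0 : Tendsto (fun t => x0 (t + 1) - x0 t) atTop (𝓝 0))
    (hdx : ∀ k, Tendsto (fun t => x (t + 1) k - x t k) atTop (𝓝 0)) (hφ : Tendsto φ atTop atTop)
    (hx : ∀ k, Tendsto (fun t => x (φ t) k) atTop (𝓝 (xs k)))
    (hx0 : Tendsto (fun t => x0 (φ t)) atTop (𝓝 x0s))
    (hys : ∀ k, g' k (xs k) + ys k = 0) :
    IsMinOn (fun z => augL g h ρ xs z ys) X x0s := by
  obtain ⟨σ, hσ⟩ := exists_update_times hcyc none φ
  have hσ_tendsto : Tendsto σ atTop atTop := tendsto_atTop_mono (fun t => (hσ t).1) hφ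
  have hxσ : ∀ k, Tendsto (fun t => x (σ t) k) atTop (𝓝 (xs k)) := fun k =>
    (hx k).comp_of_tendsto_succ_sub (u := fun n => x n k) (hdx k) hφ (T := T) fun t =>
      ⟨(hσ t).1, by have := hσ t; omega⟩
  have hyσ : ∀ k, Tendsto (fun t => y (σ t) k) atTop (𝓝 (ys k)) := fun k => by
    simpa [neg_eq_iff_add_eq_zero.2 (hys k)] using
      hA.tendsto_y_of_tendsto_x hgrad (hcont k) hσ_tendsto (hxσ k)
  have hx0σ' : Tendsto (fun t => x0 (σ t + 1)) atTop (𝓝 x0s) :=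
    hx0.comp_of_tendsto_succ_sub hdx0 hφ fun t => ⟨by have := hσ t; omega, (hσ t).2.1⟩
  have hL := continuous_augL (ρ := ρ) (fun k => continuous_iff_continuousAt.2 fun z =>
    (hgrad k z).continuousAt) hh
  have hlim : ∀ {w : ℕ → EuclideanSpace ℝ (Fin N)} {b}, Tendsto w atTop (𝓝 b) →
      Tendsto (fun t => augL g h ρ (x (σ t)) (w t) (y (σ t))) atTop (𝓝 (augL g h ρ xs b ys)) :=
    fun hw => (hL.tendsto _).comp
      ((tendsto_pi_nhds.2 hxσ).prodMk_nhds (hw.prodMk_nhds (tendsto_pi_nhds.2 hyσ)))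
  intro z hz
  exact le_of_tendsto_of_tendsto' (hlim hx0σ') (hlim tendsto_const_nhds) fun t =>
    hA.isMinOn_x0 (σ t) (hσ t).2.2 hz

end IsFlexibleADMM

theorem theorem2_1_part2_general
    {N K : ℕ} (hK : 1 ≤ K)
    (g : Fin K → EuclideanSpace ℝ (Fin N) → ℝ)
    (g' : Fin K → EuclideanSpace ℝ (Fin N) → EuclideanSpace ℝ (Fin N))
    (h : EuclideanSpace ℝ (Fin N) → ℝ)
    (X : Set (EuclideanSpace ℝ (Fin N)))
    (Lg ρ γ : Fin K → ℝ)
    (x : ℕ → Fin K → EuclideanSpace ℝ (Fin N))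
    (x0 : ℕ → EuclideanSpace ℝ (Fin N))
    (y : ℕ → Fin K → EuclideanSpace ℝ (Fin N))
    (C : ℕ → Finset (Option (Fin K)))
    -- Assumption A1
    (hgrad : ∀ k z, HasGradientAt (g k) (g' k z) z)
    (hLip : ∀ k u v, ‖g' k u - g' k v‖ ≤ Lg k * ‖u - v‖)
    (hconv : ConvexOn ℝ Set.univ h)
    (hXcl : IsClosed X) (hXcv : Convex ℝ X)
    (hρ : ∀ k, 0 < ρ k)
    -- Assumption A2
    (hstrong : ∀ k, StrongConvexOn Set.univ (γ k)
      (fun z : EuclideanSpace ℝ (Fin N) => g k z + ρ k / 2 * ‖z‖ ^ 2))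
    (hA2b : ∀ k, 2 * Lg k ^ 2 < ρ k * γ k)
    (hA2c : ∀ k, Lg k ≤ ρ k)
    -- Assumption A3 : `f` is bounded below over `X`
    (hbdd : BddBelow ((fun z => (∑ k, g k z) + h z) '' X))
    -- Algorithm 2
    (hC1 : C 1 = Finset.univ)
    (hx0upd : ∀ t : ℕ,
      (none ∈ C (t + 1) → x0 (t + 1) ∈ X ∧ ∀ z ∈ X,
        augL g h ρ (x t) (x0 (t + 1)) (y t) ≤ augL g h ρ (x t) z (y t)) ∧
      (none ∉ C (t + 1) → x0 (t + 1) = x0 t))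
    (hxupd : ∀ (t : ℕ) (k : Fin K),
      (some k ∈ C (t + 1) → ∀ z : EuclideanSpace ℝ (Fin N),
        g k (x (t + 1) k) + ⟪y t k, x (t + 1) k - x0 (t + 1)⟫
            + ρ k / 2 * ‖x (t + 1) k - x0 (t + 1)‖ ^ 2
          ≤ g k z + ⟪y t k, z - x0 (t + 1)⟫ + ρ k / 2 * ‖z - x0 (t + 1)‖ ^ 2) ∧
      (some k ∉ C (t + 1) → x (t + 1) k = x t k))
    (hyupd : ∀ (t : ℕ) (k : Fin K),
      (some k ∈ C (t + 1) → y (t + 1) k = y t k + ρ k • (x (t + 1) k - x0 (t + 1))) ∧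
      (some k ∉ C (t + 1) → y (t + 1) k = y t k))
    -- period-T essentially cyclic rule
    (T : ℕ)
    (hcyc : ∀ (t : ℕ) (j : Option (Fin K)), ∃ i, 1 ≤ i ∧ i ≤ T ∧ j ∈ C (t + i))
    -- limit point along a subsequence
    (xs : Fin K → EuclideanSpace ℝ (Fin N)) (x0s : EuclideanSpace ℝ (Fin N))
    (ys : Fin K → EuclideanSpace ℝ (Fin N))
    (φ : ℕ → ℕ) (hφ : StrictMono φ)
    (hlim_x : ∀ k, Tendsto (fun t => x (φ t) k) atTop (nhds (xs k)))
    (hlim_x0 : Tendsto (fun t => x0 (φ t)) atTop (nhds x0s))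
    (hlim_y : ∀ k, Tendsto (fun t => y (φ t) k) atTop (nhds (ys k)))
    :
    (∀ k : Fin K, g' k (xs k) + ys k = 0) ∧
    (x0s ∈ X ∧ ∀ z ∈ X,
      h x0s + ∑ k, ⟪ys k, xs k - x0s⟫ ≤ h z + ∑ k, ⟪ys k, xs k - z⟫) ∧
    (∀ k : Fin K, xs k = x0s) := by
  have hA : IsFlexibleADMM g h X ρ x x0 y C :=
    ⟨hC1, fun t ht => ((hx0upd t).1 ht).1, fun t ht => ((hx0upd t).1 ht).2,
      fun t => (hx0upd t).2, fun t k hk z _ => (hxupd t k).1 hk z, fun t k => (hxupd t k).2,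
      fun t k => (hyupd t k).1, fun t k => (hyupd t k).2⟩
  have hh : ConvexOn ℝ X h := hconv.subset (Set.subset_univ X) hXcv
  have hcont : ∀ k, Continuous (g' k) := fun k =>
    (LipschitzWith.of_dist_le' fun u v => by simpa only [dist_eq_norm] using hLip k u v).continuous
  have hφ' := hφ.tendsto_atTop
  obtain ⟨hdx0, hdx⟩ := hA.tendsto_succ_sub hK hgrad hLip hh hρ hstrong hA2b hA2c hbdd
  have hstat : ∀ k, g' k (xs k) + ys k = 0 := fun k =>
    hA.grad_add_eq_zero_of_tendsto hgrad (hcont k) hφ' (hlim_x k) (hlim_y k)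
  have hcons : ∀ k, xs k = x0s := fun k =>
    hA.eq_of_tendsto hgrad (hcont k) (hρ k) hcyc hdx0 (hdx k) hφ' (hlim_x k) hlim_x0
  have hx0s : x0s ∈ X :=
    hXcl.mem_of_tendsto hlim_x0 ((hφ'.eventually_ge_atTop 1).mono fun _ => hA.x0_mem)
  have hmin := hA.isMinOn_augL_of_tendsto hgrad hcont
    (continuousOn_univ.1 (hconv.continuousOn isOpen_univ)) hcyc hdx0 hdx hφ' hlim_x hlim_x0 hstat
  obtain rfl : xs = fun _ => x0s := funext hcons
  exact ⟨hstat, ⟨hx0s, isMinOn_iff.1 (isMinOn_add_sum_inner_of_isMinOn_augL hh hx0s hmin)⟩, hcons⟩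

/-- **Theorem 2.1, part 2.**  Under the period-`T` essentially cyclic rule and Assumptions
A1–A3, any limit point `({x*_k}, x*_0, y*)` of the ADMM iterates is a stationary solution of
the reformulated consensus problem: `∇g_k(x*_k) + y*_k = 0`, `x*_0` minimizes
`x ↦ h(x) + Σ_k ⟨y*_k, x*_k − x⟩` over `X`, and `x*_k = x*_0` for all `k`. -/
theorem theorem2_1_part2
    {N K : ℕ} (hK : 1 ≤ K)
    (g : Fin K → EuclideanSpace ℝ (Fin N) → ℝ)
    (g' : Fin K → EuclideanSpace ℝ (Fin N) → EuclideanSpace ℝ (Fin N))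
    (h : EuclideanSpace ℝ (Fin N) → ℝ)
    (X : Set (EuclideanSpace ℝ (Fin N)))
    (Lg ρ γ : Fin K → ℝ)
    (x : ℕ → Fin K → EuclideanSpace ℝ (Fin N))
    (x0 : ℕ → EuclideanSpace ℝ (Fin N))
    (y : ℕ → Fin K → EuclideanSpace ℝ (Fin N))
    (C : ℕ → Finset (Option (Fin K)))
    -- Assumption A1
    (hgrad : ∀ k z, HasGradientAt (g k) (g' k z) z)
    (hLpos : ∀ k, 0 < Lg k)
    (hLip : ∀ k u v, ‖g' k u - g' k v‖ ≤ Lg k * ‖u - v‖)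
    (hconv : ConvexOn ℝ Set.univ h)
    (hXne : X.Nonempty) (hXcl : IsClosed X) (hXcv : Convex ℝ X)
    (hρ : ∀ k, 0 < ρ k)
    -- Assumption A2
    (hγpos : ∀ k, 0 < γ k)
    (hstrong : ∀ k, StrongConvexOn Set.univ (γ k)
      (fun z : EuclideanSpace ℝ (Fin N) => g k z + ρ k / 2 * ‖z‖ ^ 2))
    (hA2b : ∀ k, 2 * Lg k ^ 2 < ρ k * γ k)
    (hA2c : ∀ k, Lg k ≤ ρ k)
    -- Assumption A3 : `f` is bounded below over `X`
    (hbdd : BddBelow ((fun z => (∑ k, g k z) + h z) '' X))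
    -- Algorithm 2
    (hC1 : C 1 = Finset.univ)
    (hx0upd : ∀ t : ℕ,
      (none ∈ C (t + 1) → x0 (t + 1) ∈ X ∧ ∀ z ∈ X,
        augL g h ρ (x t) (x0 (t + 1)) (y t) ≤ augL g h ρ (x t) z (y t)) ∧
      (none ∉ C (t + 1) → x0 (t + 1) = x0 t))
    (hxupd : ∀ (t : ℕ) (k : Fin K),
      (some k ∈ C (t + 1) → ∀ z : EuclideanSpace ℝ (Fin N),
        g k (x (t + 1) k) + ⟪y t k, x (t + 1) k - x0 (t + 1)⟫
            + ρ k / 2 * ‖x (t + 1) k - x0 (t + 1)‖ ^ 2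
          ≤ g k z + ⟪y t k, z - x0 (t + 1)⟫ + ρ k / 2 * ‖z - x0 (t + 1)‖ ^ 2) ∧
      (some k ∉ C (t + 1) → x (t + 1) k = x t k))
    (hyupd : ∀ (t : ℕ) (k : Fin K),
      (some k ∈ C (t + 1) → y (t + 1) k = y t k + ρ k • (x (t + 1) k - x0 (t + 1))) ∧
      (some k ∉ C (t + 1) → y (t + 1) k = y t k))
    -- period-T essentially cyclic rule
    (T : ℕ) (hT : 1 ≤ T)
    (hcyc : ∀ (t : ℕ) (j : Option (Fin K)), ∃ i, 1 ≤ i ∧ i ≤ T ∧ j ∈ C (t + i))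
    -- limit point along a subsequence
    (xs : Fin K → EuclideanSpace ℝ (Fin N)) (x0s : EuclideanSpace ℝ (Fin N))
    (ys : Fin K → EuclideanSpace ℝ (Fin N))
    (φ : ℕ → ℕ) (hφ : StrictMono φ)
    (hlim_x : ∀ k, Tendsto (fun t => x (φ t) k) atTop (nhds (xs k)))
    (hlim_x0 : Tendsto (fun t => x0 (φ t)) atTop (nhds x0s))
    (hlim_y : ∀ k, Tendsto (fun t => y (φ t) k) atTop (nhds (ys k)))
    :
    (∀ k : Fin K, g' k (xs k) + ys k = 0) ∧
    (x0s ∈ X ∧ ∀ z ∈ X,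
      h x0s + ∑ k, ⟪ys k, xs k - x0s⟫ ≤ h z + ∑ k, ⟪ys k, xs k - z⟫) ∧
    (∀ k : Fin K, xs k = x0s) :=
  theorem2_1_part2_general hK g g' h X Lg ρ γ x x0 y C hgrad hLip hconv hXcl hXcv hρ hstrong hA2b
    hA2c hbdd hC1 hx0upd hxupd hyupd T hcyc xs x0s ys φ hφ hlim_x hlim_x0 hlim_y
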